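/- There exists a (unique) group homomorphism φ : W → (ZMod 2) × (ZMod 2) with φ(s₁) = φ(s₃) = (1,0) and φ(s₂) = φ(s₄) = (0,1); this φ is surjective, and its kernel is isomorphic to ℤ × ℤ. -/

import Mathlib

/-!
The generators fall into the opposite pairs `{s₁, s₃}` and `{s₂, s₄}`. Each pair generates an
infinite dihedral group, and the two subgroups commute elementwise because every generator of
one pair is adjacent to both generators of the other; hence `W ≅ D∞ × D∞`, with `sᵢ` going to
the two standard reflections `sr 0`, `sr 1` of a factor. Under this isomorphism `φ` is the
product of the reflection parities `D∞ → ℤ/2`, so it is surjective and its kernel is the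
product of the two rotation subgroups, `ℤ × ℤ`.
-/

/-- The Coxeter matrix of the 4-cycle: off-diagonal entries are `2` for cyclically adjacent
indices and `0` (i.e. `∞`) for the two opposite pairs. -/
def C4 : CoxeterMatrix (Fin 4) where
  M := Matrix.of fun i j : Fin 4 ↦
    if i = j then 1
    else if (i.val + 1) % 4 = j.val ∨ (j.val + 1) % 4 = i.val then 2 else 0
  isSymm := by
    ext i j
    fin_cases i <;> fin_cases j <;> rfl
  diagonal i := by fin_cases i <;> rfl
  off_diagonal i i' := by fin_cases i <;> fin_cases i' <;> simp

/-- `W`, the right-angled Coxeter group of the 4-cycle. -/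
abbrev W : Type := C4.Group

/-- The simple reflections `s₁, s₂, s₃, s₄` of `W`, indexed by `Fin 4`
(so `s 0 = s₁`, `s 1 = s₂`, `s 2 = s₃`, `s 3 = s₄`). -/
def s (i : Fin 4) : W := C4.simple i

open DihedralGroup

theorem CoxeterSystem.commute_simple {B G : Type*} [Group G] {M : CoxeterMatrix B}
    (cs : CoxeterSystem M G) {i j : B} (h : M i j = 2) : Commute (cs.simple i) (cs.simple j) := by
  have := cs.simple_mul_simple_pow i j
  rwa [h, sq, mul_eq_one_iff_eq_inv, mul_inv_rev, cs.inv_simple, cs.inv_simple] at this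

theorem zpow_mul_eq_mul_zpow_neg {H : Type*} [Group H] {u v : H} (hu : u * u = 1)
    (hv : v * v = 1) (i : ℤ) : (u * v) ^ i * u = u * (u * v) ^ (-i) := by
  have hu' : u⁻¹ = u := inv_eq_of_mul_eq_one_left hu
  have hv' : v⁻¹ = v := inv_eq_of_mul_eq_one_left hv
  have hconj : u * (u * v) * u⁻¹ = (u * v)⁻¹ := by
    rw [mul_inv_rev, hu', hv', ← mul_assoc, hu, one_mul]
  rw [zpow_neg, ← inv_zpow, ← hconj, conj_zpow, hu', ← mul_assoc, ← mul_assoc, hu, one_mul]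

namespace DihedralGroup

variable {n : ℕ} {H : Type*} [Group H]

theorem sr_zero_mul_sr_one : (sr 0 * sr 1 : DihedralGroup n) = r 1 := by
  rw [sr_mul_sr, sub_zero]

theorem hom_ext {f g : DihedralGroup n →* H} (h0 : f (sr 0) = g (sr 0))
    (h1 : f (sr 1) = g (sr 1)) : f = g := by
  have hr (i : ZMod n) : f (r i) = g (r i) := by
    rw [← ZMod.intCast_zmod_cast i, ← r_one_zpow, ← sr_zero_mul_sr_one, map_zpow, map_zpow,
      map_mul, map_mul, h0, h1]
  ext (i | i)
  · exact hr i
  · rw [← zero_add i, ← sr_mul_r, map_mul, map_mul, h0, hr]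

def parity : DihedralGroup n →* Multiplicative (ZMod 2) where
  toFun
    | r _ => 1
    | sr _ => Multiplicative.ofAdd 1
  map_one' := rfl
  map_mul' := by
    rintro (i | i) (j | j) <;> simp only [r_mul_r, r_mul_sr, sr_mul_r, sr_mul_sr] <;> rfl

theorem parity_surjective : Function.Surjective (parity (n := n)) := by
  intro x
  fin_cases x
  exacts [⟨r 0, rfl⟩, ⟨sr 0, rfl⟩]

def rotation : Multiplicative (ZMod n) →* DihedralGroup n where
  toFun i := r i.toAdd
  map_one' := rfl
  map_mul' _ _ := rfl

theorem rotation_injective : Function.Injective (rotation (n := n)) :=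
  fun _ _ h => r.inj h

theorem range_rotation : (rotation (n := n)).range = parity.ker := by
  ext (i | i)
  · exact ⟨fun _ => rfl, fun _ => ⟨.ofAdd i, rfl⟩⟩
  · constructor
    · rintro ⟨_, ⟨⟩⟩
    · exact fun h => ((by decide : Multiplicative.ofAdd (1 : ZMod 2) ≠ 1) h).elim

noncomputable def kerParityEquiv : (parity (n := n)).ker ≃* Multiplicative (ZMod n) :=
  (MulEquiv.subgroupCongr range_rotation.symm).trans (MonoidHom.ofInjective rotation_injective).symm

section InfiniteDihedral

variable {u v : H}

-- `ZMod 0` is `ℤ` only up to unfolding; `ZMod.cast` is the identity there and has cast lemmas.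
def liftInvolutions (hu : u * u = 1) (hv : v * v = 1) : DihedralGroup 0 →* H where
  toFun
    | r i => (u * v) ^ (i.cast : ℤ)
    | sr i => u * (u * v) ^ (i.cast : ℤ)
  map_one' := zpow_zero _
  map_mul' := by
    rintro (i | i) (j | j) <;>
      simp only [r_mul_r, r_mul_sr, sr_mul_r, sr_mul_sr, ZMod.cast_add', ZMod.cast_sub']
    · exact zpow_add _ _ _
    · rw [← mul_assoc, zpow_mul_eq_mul_zpow_neg hu hv, mul_assoc, ← zpow_add, neg_add_eq_sub]
    · rw [mul_assoc, ← zpow_add]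
    · rw [mul_assoc, ← mul_assoc _ u, zpow_mul_eq_mul_zpow_neg hu hv, ← mul_assoc, ← mul_assoc,
        hu, one_mul, ← zpow_add, neg_add_eq_sub]

@[simp] theorem liftInvolutions_sr_zero (hu : u * u = 1) (hv : v * v = 1) :
    liftInvolutions hu hv (sr 0) = u := by
  show u * (u * v) ^ ((0 : ZMod 0).cast : ℤ) = u
  rw [ZMod.cast_zero, zpow_zero, mul_one]

@[simp] theorem liftInvolutions_sr_one (hu : u * u = 1) (hv : v * v = 1) :
    liftInvolutions hu hv (sr 1) = v := by
  show u * (u * v) ^ ((1 : ZMod 0).cast : ℤ) = v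
  rw [ZMod.cast_one', zpow_one, ← mul_assoc, hu, one_mul]

theorem commute_liftInvolutions {w : H} (hu : u * u = 1) (hv : v * v = 1) (hwu : Commute u w)
    (hwv : Commute v w) (x : DihedralGroup 0) : Commute (liftInvolutions hu hv x) w := by
  have huv : Commute (u * v) w := hwu.mul_left hwv
  rcases x with i | i
  · exact huv.zpow_left _
  · exact hwu.mul_left (huv.zpow_left _)

end InfiniteDihedral

end DihedralGroup

namespace W

local notation "D∞" => DihedralGroup 0

theorem hom_ext {G : Type*} [Monoid G] {f g : W →* G} (h : ∀ i, f (s i) = g (s i)) : f = g :=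
  C4.toCoxeterSystem.ext_simple h

theorem s_mul_self (i : Fin 4) : s i * s i = 1 :=
  C4.toCoxeterSystem.simple_mul_simple_self i

theorem commute_s {i j : Fin 4} (h : C4 i j = 2) : Commute (s i) (s j) :=
  C4.toCoxeterSystem.commute_simple h

def simpleImage : Fin 4 → D∞ × D∞ :=
  ![(sr 0, 1), (1, sr 0), (sr 1, 1), (1, sr 1)]

theorem isLiftable_simpleImage : C4.IsLiftable simpleImage := by
  unfold CoxeterMatrix.IsLiftable
  decide

def toDihedralProd : W →* D∞ × D∞ :=
  C4.toCoxeterSystem.lift ⟨simpleImage, isLiftable_simpleImage⟩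

theorem toDihedralProd_s (i : Fin 4) : toDihedralProd (s i) = simpleImage i :=
  C4.toCoxeterSystem.lift_apply_simple isLiftable_simpleImage i

def ofDihedralProd : D∞ × D∞ →* W :=
  (liftInvolutions (s_mul_self 0) (s_mul_self 2)).noncommCoprod
    (liftInvolutions (s_mul_self 1) (s_mul_self 3)) fun x y =>
      commute_liftInvolutions _ _
        (commute_liftInvolutions _ _ (commute_s rfl) (commute_s rfl) y).symm
        (commute_liftInvolutions _ _ (commute_s rfl) (commute_s rfl) y).symm x

theorem ofDihedralProd_simpleImage (i : Fin 4) : ofDihedralProd (simpleImage i) = s i := by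
  fin_cases i <;> simp [simpleImage, ofDihedralProd]

theorem toDihedralProd_comp_liftInvolutions_left :
    toDihedralProd.comp (liftInvolutions (s_mul_self 0) (s_mul_self 2)) = MonoidHom.inl _ _ :=
  DihedralGroup.hom_ext (by simp [toDihedralProd_s, simpleImage])
    (by simp [toDihedralProd_s, simpleImage])

theorem toDihedralProd_comp_liftInvolutions_right :
    toDihedralProd.comp (liftInvolutions (s_mul_self 1) (s_mul_self 3)) = MonoidHom.inr _ _ :=
  DihedralGroup.hom_ext (by simp [toDihedralProd_s, simpleImage])
    (by simp [toDihedralProd_s, simpleImage])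

def equivDihedralProd : W ≃* D∞ × D∞ :=
  toDihedralProd.toMulEquiv ofDihedralProd
    (hom_ext fun i => by simp [toDihedralProd_s, ofDihedralProd_simpleImage])
    (by simp [ofDihedralProd, MonoidHom.comp_noncommCoprod,
      toDihedralProd_comp_liftInvolutions_left, toDihedralProd_comp_liftInvolutions_right])

def parity : W →* Multiplicative (ZMod 2 × ZMod 2) :=
  ((MulEquiv.prodMultiplicative (ZMod 2) (ZMod 2)).symm : _ →* _).comp
    ((DihedralGroup.parity.prodMap DihedralGroup.parity).comp
      (equivDihedralProd : W →* D∞ × D∞))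

theorem parity_s (i : Fin 4) :
    parity (s i) = ![.ofAdd (1, 0), .ofAdd (0, 1), .ofAdd (1, 0), .ofAdd (0, 1)] i := by
  show (MulEquiv.prodMultiplicative _ _).symm
    ((DihedralGroup.parity.prodMap DihedralGroup.parity) (toDihedralProd (s i))) = _
  rw [toDihedralProd_s]
  fin_cases i <;> rfl

theorem parity_surjective : Function.Surjective parity := by
  simp only [parity, MonoidHom.coe_comp, MonoidHom.coe_prodMap, MonoidHom.coe_coe]
  exact (MulEquiv.surjective _).comp
    ((DihedralGroup.parity_surjective.prodMap DihedralGroup.parity_surjective).comp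
      equivDihedralProd.surjective)

theorem ker_parity : parity.ker = (DihedralGroup.parity.ker.prod DihedralGroup.parity.ker).map
    (equivDihedralProd.symm : D∞ × D∞ →* W) := by
  rw [parity, MonoidHom.ker_mulEquiv_comp, MonoidHom.ker_comp_mulEquiv, MonoidHom.ker_prodMap]

noncomputable def kerParityEquiv : parity.ker ≃* Multiplicative (ℤ × ℤ) :=
  (MulEquiv.subgroupCongr ker_parity).trans <|
    (equivDihedralProd.symm.subgroupMap _).symm.trans <|
      (Subgroup.prodEquiv _ _).trans <|
        (DihedralGroup.kerParityEquiv.prodCongr DihedralGroup.kerParityEquiv).trans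
          (MulEquiv.prodMultiplicative ℤ ℤ).symm

theorem eq_parity_of_s {φ : W →* Multiplicative (ZMod 2 × ZMod 2)}
    (h : φ (s 0) = Multiplicative.ofAdd (1, 0) ∧ φ (s 1) = Multiplicative.ofAdd (0, 1) ∧
      φ (s 2) = Multiplicative.ofAdd (1, 0) ∧ φ (s 3) = Multiplicative.ofAdd (0, 1)) :
    φ = parity := by
  obtain ⟨h0, h1, h2, h3⟩ := h
  refine hom_ext fun i => ?_
  fin_cases i <;> simp [parity_s, h0, h1, h2, h3]

end W

/-- There is a unique group homomorphism `φ : W → (ZMod 2) × (ZMod 2)` with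
`φ(s₁) = φ(s₃) = (1,0)` and `φ(s₂) = φ(s₄) = (0,1)`; it is surjective and its kernel is
isomorphic to `ℤ × ℤ`. -/
theorem stmt1 :
    (∃! φ : W →* Multiplicative (ZMod 2 × ZMod 2),
      φ (s 0) = Multiplicative.ofAdd (1, 0) ∧ φ (s 1) = Multiplicative.ofAdd (0, 1) ∧
      φ (s 2) = Multiplicative.ofAdd (1, 0) ∧ φ (s 3) = Multiplicative.ofAdd (0, 1)) ∧
    ∀ φ : W →* Multiplicative (ZMod 2 × ZMod 2),
      (φ (s 0) = Multiplicative.ofAdd (1, 0) ∧ φ (s 1) = Multiplicative.ofAdd (0, 1) ∧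
       φ (s 2) = Multiplicative.ofAdd (1, 0) ∧ φ (s 3) = Multiplicative.ofAdd (0, 1)) →
      Function.Surjective φ ∧ Nonempty (φ.ker ≃* Multiplicative (ℤ × ℤ)) := by
  refine ⟨⟨W.parity, ⟨W.parity_s 0, W.parity_s 1, W.parity_s 2, W.parity_s 3⟩,
    fun φ h => W.eq_parity_of_s h⟩, fun φ h => ?_⟩
  obtain rfl := W.eq_parity_of_s h
  exact ⟨W.parity_surjective, ⟨W.kerParityEquiv⟩⟩
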